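/- Let n ∈ ℕ, X ∈ ℝ^{n×n}, β ∈ ℝ. For i,j ∈ {1,…,n}, let J_{ij} be the n×n matrix with 1 in position (i,j) and 0 elsewhere, and let D_{ij}μ(σ) denote the derivative at ξ = 0 of the map ξ ↦ μ_{β, X + ξ J_{ij}}(σ). Then Σ_{σ ∈ {-1,1}^n} Σ_{i,j=1}^n σ(i)σ(j) D_{ij}μ(σ) = −β n² (1 − ⟨R_{1,2}(σ1,σ2)²⟩_{β,X}), where the Gibbs average is over two independent samples from μ_{β,X}. -/

import Mathlib

/-!
Perturbing the entry `(i, j)` of `X` tilts the Gibbs weights by `exp (-β ξ σ(i) σ(j))`, so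
`D_{ij} μ(σ) = -β μ(σ) (σ(i) σ(j) - ⟨σ(i) σ(j)⟩)`. Summing against `σ(i) σ(j)` gives `-β` times
the variance of `σ(i) σ(j)`, which is `1 - ⟨σ(i) σ(j)⟩²` because spins square to `1`. Finally,
writing each square `⟨σ(i) σ(j)⟩²` as an average over two independent replicas and summing over
`i, j` gives `∑_{i,j} ⟨σ(i) σ(j)⟩² = n² ⟨R_{1,2}²⟩`.
-/

open MeasureTheory ProbabilityTheory Filter

noncomputable section

/-- The value of a ±1 spin encoded as a Boolean. -/
def spin (b : Bool) : ℝ := if b then 1 else -1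

/-- The Ising Hamiltonian `H(σ; X) = ∑_{i,j} X i j σ(i) σ(j)`. -/
def Ham {n : ℕ} (X : Fin n → Fin n → ℝ) (σ : Fin n → Bool) : ℝ :=
  ∑ i, ∑ j, X i j * spin (σ i) * spin (σ j)

/-- The partition function `Z(β, X)`. -/
def Zpart {n : ℕ} (β : ℝ) (X : Fin n → Fin n → ℝ) : ℝ :=
  ∑ σ : Fin n → Bool, Real.exp (-β * Ham X σ)

/-- The Gibbs probability mass function `μ_{β,X}(σ)`. -/
def gibbs {n : ℕ} (β : ℝ) (X : Fin n → Fin n → ℝ) (σ : Fin n → Bool) : ℝ :=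
  Real.exp (-β * Ham X σ) / Zpart β X

/-- A configuration is a bisection if `|∑ i σ(i)| ≤ 1`. -/
def isBis {n : ℕ} (σ : Fin n → Bool) : Prop := |∑ i, spin (σ i)| ≤ 1

open scoped Classical in
/-- The bisection partition function `Z^bis(β, X)`. -/
def ZpartBis {n : ℕ} (β : ℝ) (X : Fin n → Fin n → ℝ) : ℝ :=
  ∑ σ : Fin n → Bool, if isBis σ then Real.exp (-β * Ham X σ) else 0

open scoped Classical in
/-- The bisection Gibbs probability mass function `μ^bis_{β,X}(σ)`. -/
def gibbsBis {n : ℕ} (β : ℝ) (X : Fin n → Fin n → ℝ) (σ : Fin n → Bool) : ℝ :=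
  if isBis σ then Real.exp (-β * Ham X σ) / ZpartBis β X else 0

/-- The overlap `R_{1,2}(σ1, σ2) = (1/n) ∑ i σ1(i) σ2(i)`. -/
def overlap {n : ℕ} (σ1 σ2 : Fin n → Bool) : ℝ :=
  (1 / (n : ℝ)) * ∑ i, spin (σ1 i) * spin (σ2 i)

/-- Gibbs average of a one-variable observable. -/
def avg1 {n : ℕ} (β : ℝ) (X : Fin n → Fin n → ℝ) (f : (Fin n → Bool) → ℝ) : ℝ :=
  ∑ σ : Fin n → Bool, f σ * gibbs β X σ

/-- Bisection Gibbs average of a one-variable observable. -/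
def avg1Bis {n : ℕ} (β : ℝ) (X : Fin n → Fin n → ℝ) (f : (Fin n → Bool) → ℝ) : ℝ :=
  ∑ σ : Fin n → Bool, f σ * gibbsBis β X σ

/-- Coupled Gibbs average: `σ1 ~ μ_{β,X}`, `σ2 ~ μ_{β,Y}` independent. -/
def avg2c {n : ℕ} (β : ℝ) (X Y : Fin n → Fin n → ℝ)
    (f : (Fin n → Bool) → (Fin n → Bool) → ℝ) : ℝ :=
  ∑ σ1 : Fin n → Bool, ∑ σ2 : Fin n → Bool, f σ1 σ2 * gibbs β X σ1 * gibbs β Y σ2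

/-- Gibbs average of a two-replica observable. -/
def avg2 {n : ℕ} (β : ℝ) (X : Fin n → Fin n → ℝ)
    (f : (Fin n → Bool) → (Fin n → Bool) → ℝ) : ℝ :=
  avg2c β X X f

/-- Coupled bisection Gibbs average. -/
def avg2cBis {n : ℕ} (β : ℝ) (X Y : Fin n → Fin n → ℝ)
    (f : (Fin n → Bool) → (Fin n → Bool) → ℝ) : ℝ :=
  ∑ σ1 : Fin n → Bool, ∑ σ2 : Fin n → Bool, f σ1 σ2 * gibbsBis β X σ1 * gibbsBis β Y σ2

/-- Bisection Gibbs average of a two-replica observable. -/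
def avg2Bis {n : ℕ} (β : ℝ) (X : Fin n → Fin n → ℝ)
    (f : (Fin n → Bool) → (Fin n → Bool) → ℝ) : ℝ :=
  avg2cBis β X X f

/-- The SK disorder: i.i.d. entries `N(0, 1/(2n))`. -/
def skMeasure (n : ℕ) : Measure (Fin n → Fin n → ℝ) :=
  Measure.pi fun _ => Measure.pi fun _ => gaussianReal 0 (1 / (2 * n))

/-- The law of the pair `(g, g')` of independent SK disorders. -/
def skPair (n : ℕ) : Measure ((Fin n → Fin n → ℝ) × (Fin n → Fin n → ℝ)) :=
  (skMeasure n).prod (skMeasure n)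

/-- The perturbed SK disorder `g_t = √(1-t) g + √t g'`. -/
def skPerturb {n : ℕ} (t : ℝ) (g g' : Fin n → Fin n → ℝ) : Fin n → Fin n → ℝ :=
  fun i j => Real.sqrt (1 - t) * g i j + Real.sqrt t * g' i j

/-- The sparse disorder: i.i.d. entries `Poisson(d/(2n))`. -/
def sparseMeasure (n : ℕ) (d : ℝ) : Measure (Fin n → Fin n → ℕ) :=
  Measure.pi fun _ => Measure.pi fun _ => poissonMeasure (d / (2 * n)).toNNReal

/-- The law of the triple `(A^{(1-t)}, A^{(t,1)}, A^{(t,2)})` of independent sparse disorders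
used to build the coupled pair `A = A^{(1-t)} + A^{(t,1)}`, `A_t = A^{(1-t)} + A^{(t,2)}`. -/
def coupledSparse (n : ℕ) (d t : ℝ) :
    Measure ((Fin n → Fin n → ℕ) × (Fin n → Fin n → ℕ) × (Fin n → Fin n → ℕ)) :=
  (sparseMeasure n ((1 - t) * d)).prod
    ((sparseMeasure n (t * d)).prod (sparseMeasure n (t * d)))

/-- View an ℕ-valued matrix as a real matrix. -/
def natMat {n : ℕ} (A : Fin n → Fin n → ℕ) : Fin n → Fin n → ℝ := fun i j => (A i j : ℝ)

/-- The Gibbs measure `μ_{β,X}` as a probability measure on configurations. -/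
def gibbsMeasure {n : ℕ} (β : ℝ) (X : Fin n → Fin n → ℝ) : Measure (Fin n → Bool) :=
  ∑ σ : Fin n → Bool, ENNReal.ofReal (gibbs β X σ) • Measure.dirac σ

/-- The bisection Gibbs measure `μ^bis_{β,X}` as a measure on configurations. -/
def gibbsBisMeasure {n : ℕ} (β : ℝ) (X : Fin n → Fin n → ℝ) : Measure (Fin n → Bool) :=
  ∑ σ : Fin n → Bool, ENNReal.ofReal (gibbsBis β X σ) • Measure.dirac σ

/-- Normalized Wasserstein distance `W_{2,n}` between measures on `{-1,1}^n`. -/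
def W2 (n : ℕ) (μ1 μ2 : Measure (Fin n → Bool)) : ℝ :=
  sInf {r : ℝ | ∃ π : Measure ((Fin n → Bool) × (Fin n → Bool)),
    IsProbabilityMeasure π ∧ π.map Prod.fst = μ1 ∧ π.map Prod.snd = μ2 ∧
    r = Real.sqrt (∫ p, (1 / (n : ℝ)) * ∑ i, (spin (p.1 i) - spin (p.2 i)) ^ 2 ∂π)}

open scoped Classical in
/-- Overlap-restricted coupled partition function `Z^S_{X,Y}`. -/
def Zres {n : ℕ} (β : ℝ) (S : Set ℝ) (X Y : Fin n → Fin n → ℝ) : ℝ :=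
  ∑ σ1 : Fin n → Bool, ∑ σ2 : Fin n → Bool,
    if overlap σ1 σ2 ∈ S then Real.exp (-β * (Ham X σ1 + Ham Y σ2)) else 0

open scoped Classical in
/-- Overlap-restricted coupled bisection partition function `Z^{S,bis}_{X,Y}`. -/
def ZresBis {n : ℕ} (β : ℝ) (S : Set ℝ) (X Y : Fin n → Fin n → ℝ) : ℝ :=
  ∑ σ1 : Fin n → Bool, ∑ σ2 : Fin n → Bool,
    if isBis σ1 ∧ isBis σ2 ∧ overlap σ1 σ2 ∈ S
    then Real.exp (-β * (Ham X σ1 + Ham Y σ2)) else 0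

/-- The matrix with a single `1` in position `(i,j)`. -/
def Jmat {n : ℕ} (i j : Fin n) : Fin n → Fin n → ℝ :=
  fun a b => if a = i ∧ b = j then 1 else 0

end

theorem hasDerivAt_exp_div_sum_exp {α : Type*} [Fintype α] [Nonempty α] (E c : α → ℝ)
    (σ : α) :
    HasDerivAt (fun ξ => Real.exp (E σ + ξ * c σ) / ∑ τ, Real.exp (E τ + ξ * c τ))
      (Real.exp (E σ) / (∑ τ, Real.exp (E τ)) *
        (c σ - ∑ τ, c τ * (Real.exp (E τ) / ∑ τ', Real.exp (E τ')))) 0 := by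
  have hexp : ∀ τ, HasDerivAt (fun ξ => Real.exp (E τ + ξ * c τ)) (c τ * Real.exp (E τ)) 0 :=
    fun τ => by
      simpa [mul_comm] using (((hasDerivAt_id (0 : ℝ)).mul_const (c τ)).const_add (E τ)).exp
  have hZ : (∑ τ, Real.exp (E τ)) ≠ 0 :=
    (Finset.sum_pos (fun _ _ => Real.exp_pos _) Finset.univ_nonempty).ne'
  have hsum := HasDerivAt.fun_sum (u := Finset.univ) fun τ _ => hexp τ
  refine ((hexp σ).fun_div hsum (by simpa using hZ)).congr_deriv ?_
  simp only [zero_mul, add_zero, ← mul_div_assoc, ← Finset.sum_div]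
  field_simp

theorem sum_mul_mul_sub_sum_mul {α : Type*} [Fintype α] (p c : α → ℝ) :
    ∑ σ, c σ * (p σ * (c σ - ∑ τ, c τ * p τ)) = ∑ σ, c σ ^ 2 * p σ - (∑ σ, c σ * p σ) ^ 2 := by
  set m := ∑ τ, c τ * p τ
  have h : ∀ σ, c σ * (p σ * (c σ - m)) = c σ ^ 2 * p σ - c σ * p σ * m := fun σ => by ring
  rw [Finset.sum_congr rfl fun σ _ => h σ, Finset.sum_sub_distrib, ← Finset.sum_mul, sq]

lemma spin_sq (b : Bool) : spin b ^ 2 = 1 := by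
  cases b <;> simp [spin]

lemma Zpart_pos {n : ℕ} (β : ℝ) (X : Fin n → Fin n → ℝ) : 0 < Zpart β X :=
  Finset.sum_pos (fun _ _ => Real.exp_pos _) Finset.univ_nonempty

lemma sum_gibbs {n : ℕ} (β : ℝ) (X : Fin n → Fin n → ℝ) :
    ∑ σ : Fin n → Bool, gibbs β X σ = 1 := by
  simp only [gibbs, ← Finset.sum_div]
  exact div_self (Zpart_pos β X).ne'

lemma Ham_add_smul_Jmat {n : ℕ} (X : Fin n → Fin n → ℝ) (i j : Fin n) (ξ : ℝ)
    (σ : Fin n → Bool) :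
    Ham (fun a b => X a b + ξ * Jmat i j a b) σ = Ham X σ + ξ * (spin (σ i) * spin (σ j)) := by
  simp [Ham, add_mul, Finset.sum_add_distrib, Jmat, ite_and]
  ring

lemma hasDerivAt_gibbs_add_smul_Jmat {n : ℕ} (β : ℝ) (X : Fin n → Fin n → ℝ) (i j : Fin n)
    (σ : Fin n → Bool) :
    HasDerivAt (fun ξ => gibbs β (fun a b => X a b + ξ * Jmat i j a b) σ)
      (-β * (gibbs β X σ *
        (spin (σ i) * spin (σ j) - avg1 β X fun τ => spin (τ i) * spin (τ j)))) 0 := by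
  convert hasDerivAt_exp_div_sum_exp (fun τ => -β * Ham X τ)
    (fun τ => -β * (spin (τ i) * spin (τ j))) σ using 1
  · ext ξ
    simp only [gibbs, Zpart, Ham_add_smul_Jmat]
    ring_nf
  · simp only [gibbs, Zpart, avg1, ← mul_sub, ← Finset.mul_sum, mul_assoc]
    ring

lemma natCast_sq_mul_overlap_sq {n : ℕ} (σ τ : Fin n → Bool) :
    (n : ℝ) ^ 2 * overlap σ τ ^ 2 = (∑ k, spin (σ k) * spin (τ k)) ^ 2 := by
  rcases Nat.eq_zero_or_pos n with rfl | hn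
  · simp
  · have : (n : ℝ) ≠ 0 := by positivity
    rw [overlap]
    field_simp

lemma sum_sq_avg1_spin_mul_spin {n : ℕ} (β : ℝ) (X : Fin n → Fin n → ℝ) :
    ∑ i, ∑ j, (avg1 β X fun τ => spin (τ i) * spin (τ j)) ^ 2
      = (n : ℝ) ^ 2 * avg2 β X fun σ1 σ2 => overlap σ1 σ2 ^ 2 := by
  have hreplicas : ∀ σ τ : Fin n → Bool,
      (n : ℝ) ^ 2 * overlap σ τ ^ 2 * gibbs β X σ * gibbs β X τ
        = ∑ i, ∑ j, spin (σ i) * spin (σ j) * gibbs β X σ *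
            (spin (τ i) * spin (τ j) * gibbs β X τ) := by
    intro σ τ
    rw [natCast_sq_mul_overlap_sq, sq, Finset.sum_mul_sum, Finset.sum_mul, Finset.sum_mul]
    refine Finset.sum_congr rfl fun i _ => ?_
    rw [Finset.sum_mul, Finset.sum_mul]
    exact Finset.sum_congr rfl fun j _ => by ring
  calc _ = ∑ i, ∑ j, ∑ σ, ∑ τ,
        spin (σ i) * spin (σ j) * gibbs β X σ * (spin (τ i) * spin (τ j) * gibbs β X τ) := by
        simp only [avg1, sq, Finset.sum_mul_sum]
    _ = ∑ σ, ∑ τ, ∑ i, ∑ j,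
        spin (σ i) * spin (σ j) * gibbs β X σ * (spin (τ i) * spin (τ j) * gibbs β X τ) := by
        simp_rw [Finset.sum_comm (γ := Fin n) (α := Fin n → Bool)]
    _ = _ := by
        rw [avg2, avg2c, Finset.mul_sum]
        refine Finset.sum_congr rfl fun σ _ => ?_
        rw [Finset.mul_sum]
        exact Finset.sum_congr rfl fun τ _ => by rw [← hreplicas]; ring

/-- identity relating the derivative of the Gibbs weights in the
matrix entries to the average squared overlap. -/
theorem stmt_10 (n : ℕ) (X : Fin n → Fin n → ℝ) (β : ℝ) :
    ∑ σ : Fin n → Bool, ∑ i, ∑ j, spin (σ i) * spin (σ j) *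
        deriv (fun ξ : ℝ => gibbs β (fun a b => X a b + ξ * Jmat i j a b) σ) 0
      = -β * (n : ℝ) ^ 2 * (1 - avg2 β X (fun σ1 σ2 => (overlap σ1 σ2) ^ 2)) := by
  have hvariance : ∀ i j, ∑ σ : Fin n → Bool, spin (σ i) * spin (σ j) *
        deriv (fun ξ : ℝ => gibbs β (fun a b => X a b + ξ * Jmat i j a b) σ) 0
      = -β * (1 - (avg1 β X fun τ => spin (τ i) * spin (τ j)) ^ 2) := by
    intro i j
    simp only [(hasDerivAt_gibbs_add_smul_Jmat β X i j _).deriv, mul_left_comm _ (-β),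
      ← Finset.mul_sum]
    rw [avg1, sum_mul_mul_sub_sum_mul]
    simp only [mul_pow, spin_sq, one_mul, sum_gibbs]
  calc _ = ∑ i, ∑ j, -β * (1 - (avg1 β X fun τ => spin (τ i) * spin (τ j)) ^ 2) := by
        rw [Finset.sum_comm]
        refine Finset.sum_congr rfl fun i _ => ?_
        rw [Finset.sum_comm]
        exact Finset.sum_congr rfl fun j _ => hvariance i j
    _ = -β * ((n : ℝ) ^ 2 - ∑ i, ∑ j, (avg1 β X fun τ => spin (τ i) * spin (τ j)) ^ 2) := by
        simp only [← Finset.mul_sum, mul_sub, Finset.sum_sub_distrib, Finset.sum_const,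
          Finset.card_univ, Fintype.card_fin, nsmul_eq_mul, mul_one]
        ring
    _ = _ := by
        rw [sum_sq_avg1_spin_mul_spin]
        ring
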